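/- arXiv:math/0105045 — 5 statements merged into one kernel-verified Lean document; each statement's English description precedes it below -/
import Mathlib

section
/- For every infinite set of real numbers X: (1) X satisfies S₁(T,Γ) if and only if X satisfies both binom(T,Γ) and Sfin(Γ,T); (2) X satisfies S₁(B_T,B_Γ) if and only if X satisfies both binom(B_T,B_Γ) and Sfin(B_Γ,B_T). -/
open Set

namespace TauCoverPaper

/-- `a ⊆* b`: `a \ b` is finite. -/
def AlmostSubset (a b : Set ℕ) : Prop := (a \ b).Finite

/-- `Y` is linearly quasiordered by `⊆*`. -/
def LinQuasi (Y : Set (Set ℕ)) : Prop :=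
  ∀ a ∈ Y, ∀ b ∈ Y, AlmostSubset a b ∨ AlmostSubset b a

/-- `a` is a pseudo-intersection of the family `Y`. -/
def PseudoIntersection (a : Set ℕ) (Y : Set (Set ℕ)) : Prop :=
  a.Infinite ∧ ∀ b ∈ Y, AlmostSubset a b

/-- `Y` is centered: every nonempty finite subfamily has infinite intersection. -/
def Centered (Y : Set (Set ℕ)) : Prop :=
  ∀ F : Set (Set ℕ), F ⊆ Y → F.Finite → F.Nonempty → (⋂₀ F).Infinite

/-- A tower: a family of infinite subsets of `ℕ`, linearly quasiordered by `⊆*`,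
with no pseudo-intersection. -/
def IsTower (Y : Set (Set ℕ)) : Prop :=
  (∀ a ∈ Y, a.Infinite) ∧ LinQuasi Y ∧ ¬ ∃ a, PseudoIntersection a Y

variable {α : Type}

/-- A cover of the space `α`: the union is everything, and the whole space is
not a member. -/
def IsCover (𝒰 : Set (Set α)) : Prop := ⋃₀ 𝒰 = univ ∧ univ ∉ 𝒰

/-- A large cover: each point belongs to infinitely many members. -/
def IsLargeCover (𝒰 : Set (Set α)) : Prop :=
  IsCover 𝒰 ∧ ∀ x : α, {U ∈ 𝒰 | x ∈ U}.Infinite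

/-- An ω-cover: each finite set is contained in some member. -/
def IsOmegaCover (𝒰 : Set (Set α)) : Prop :=
  IsCover 𝒰 ∧ ∀ F : Set α, F.Finite → ∃ U ∈ 𝒰, F ⊆ U

/-- A γ-cover: infinite, and each point belongs to all but finitely many members. -/
def IsGammaCover (𝒰 : Set (Set α)) : Prop :=
  IsCover 𝒰 ∧ 𝒰.Infinite ∧ ∀ x : α, {U ∈ 𝒰 | x ∉ U}.Finite

/-- A τ-cover: a large cover such that for all `x, y`, one of the sets
`{U : x ∈ U, y ∉ U}`, `{U : y ∈ U, x ∉ U}` is finite. -/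
def IsTauCover (𝒰 : Set (Set α)) : Prop :=
  IsLargeCover 𝒰 ∧ ∀ x y : α,
    {U ∈ 𝒰 | x ∈ U ∧ y ∉ U}.Finite ∨ {U ∈ 𝒰 | y ∈ U ∧ x ∉ U}.Finite

/-- A τ*-cover: a large, countably infinite cover which, enumerated bijectively
as `⟨Uₙ⟩`, admits for each point `y` an infinite `r y ⊆ {n | y ∈ Uₙ}` such that
the family `{r y}` is linearly quasiordered by `⊆*`. -/
def IsTauStarCover (𝒰 : Set (Set α)) : Prop :=
  IsLargeCover 𝒰 ∧
  ∃ U : ℕ → Set α, Function.Injective U ∧ Set.range U = 𝒰 ∧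
    ∃ r : α → Set ℕ,
      (∀ y : α, (r y).Infinite ∧ r y ⊆ {n | y ∈ U n}) ∧
      (∀ y z : α, AlmostSubset (r y) (r z) ∨ AlmostSubset (r z) (r y))

/-- Ω : countable open ω-covers. -/
def OpenOmega (α : Type) [TopologicalSpace α] : Set (Set (Set α)) :=
  {𝒰 | 𝒰.Countable ∧ (∀ U ∈ 𝒰, IsOpen U) ∧ IsOmegaCover 𝒰}

/-- Γ : countable open γ-covers. -/
def OpenGamma (α : Type) [TopologicalSpace α] : Set (Set (Set α)) :=
  {𝒰 | 𝒰.Countable ∧ (∀ U ∈ 𝒰, IsOpen U) ∧ IsGammaCover 𝒰}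

/-- T : countable open τ-covers. -/
def OpenTau (α : Type) [TopologicalSpace α] : Set (Set (Set α)) :=
  {𝒰 | 𝒰.Countable ∧ (∀ U ∈ 𝒰, IsOpen U) ∧ IsTauCover 𝒰}

/-- T* : countable open τ*-covers. -/
def OpenTauStar (α : Type) [TopologicalSpace α] : Set (Set (Set α)) :=
  {𝒰 | 𝒰.Countable ∧ (∀ U ∈ 𝒰, IsOpen U) ∧ IsTauStarCover 𝒰}

/-- B_Ω : countable Borel ω-covers. -/
def BorelOmega (α : Type) [MeasurableSpace α] : Set (Set (Set α)) :=
  {𝒰 | 𝒰.Countable ∧ (∀ U ∈ 𝒰, MeasurableSet U) ∧ IsOmegaCover 𝒰}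

/-- B_Γ : countable Borel γ-covers. -/
def BorelGamma (α : Type) [MeasurableSpace α] : Set (Set (Set α)) :=
  {𝒰 | 𝒰.Countable ∧ (∀ U ∈ 𝒰, MeasurableSet U) ∧ IsGammaCover 𝒰}

/-- B_T : countable Borel τ-covers. -/
def BorelTau (α : Type) [MeasurableSpace α] : Set (Set (Set α)) :=
  {𝒰 | 𝒰.Countable ∧ (∀ U ∈ 𝒰, MeasurableSet U) ∧ IsTauCover 𝒰}

/-- The selection principle S₁(𝔘,𝔙). -/
def S1 (𝔘 𝔙 : Set (Set (Set α))) : Prop :=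
  ∀ 𝒰 : ℕ → Set (Set α), (∀ n, 𝒰 n ∈ 𝔘) →
    ∃ V : ℕ → Set α, (∀ n, V n ∈ 𝒰 n) ∧ Set.range V ∈ 𝔙

/-- The selection principle Sfin(𝔘,𝔙). -/
def Sfin (𝔘 𝔙 : Set (Set (Set α))) : Prop :=
  ∀ 𝒰 : ℕ → Set (Set α), (∀ n, 𝒰 n ∈ 𝔘) →
    ∃ F : ℕ → Set (Set α), (∀ n, (F n).Finite ∧ F n ⊆ 𝒰 n) ∧ (⋃ n, F n) ∈ 𝔙

/-- The selection principle Ufin(𝔘,𝔙). -/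
def Ufin (𝔘 𝔙 : Set (Set (Set α))) : Prop :=
  ∀ 𝒰 : ℕ → Set (Set α), (∀ n, 𝒰 n ∈ 𝔘) →
    (∀ n, ¬ ∃ F : Set (Set α), F ⊆ 𝒰 n ∧ F.Finite ∧ ⋃₀ F = univ) →
    ∃ F : ℕ → Set (Set α), (∀ n, (F n).Finite ∧ F n ⊆ 𝒰 n) ∧
      Set.range (fun n => ⋃₀ (F n)) ∈ 𝔙

/-- binom(𝔘,𝔙): each member of 𝔘 contains a subfamily belonging to 𝔙. -/
def Binom (𝔘 𝔙 : Set (Set (Set α))) : Prop :=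
  ∀ 𝒰 ∈ 𝔘, ∃ 𝒱 ⊆ 𝒰, 𝒱 ∈ 𝔙

/-- Borel measurability of a map into `P(ℕ)` (identified with the Cantor
space via characteristic functions): each coordinate is measurable. -/
def BorelMeasSets {β : Type} [MeasurableSpace β] (f : β → Set ℕ) : Prop :=
  ∀ n : ℕ, MeasurableSet {x | n ∈ f x}

/-- The excluded middle property for a family `Y ⊆ ℕ^ℕ`. -/
def ExcludedMiddleProp (Y : Set (ℕ → ℕ)) : Prop :=
  ∃ g : ℕ → ℕ,
    (∀ f ∈ Y, {n | f n < g n}.Infinite) ∧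
    ∀ f ∈ Y, ∀ h ∈ Y,
      {n | f n < g n ∧ g n ≤ h n}.Finite ∨ {n | h n < g n ∧ g n ≤ f n}.Finite

/-- non(J): the minimal cardinality of a set of reals not satisfying `J`. -/
noncomputable def nonCard (J : Set ℝ → Prop) : Cardinal :=
  sInf {c : Cardinal | ∃ X : Set ℝ, ¬ J X ∧ Cardinal.mk ↥X = c}

/-- add(J): the minimal cardinality of a family of sets of reals, each
satisfying `J`, whose union does not satisfy `J`. -/
noncomputable def addCard (J : Set ℝ → Prop) : Cardinal :=
  sInf {c : Cardinal | ∃ 𝔉 : Set (Set ℝ),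
    (∀ A ∈ 𝔉, J A) ∧ ¬ J (⋃₀ 𝔉) ∧ Cardinal.mk ↥𝔉 = c}

/-- 𝔱 : the minimal cardinality of a tower. -/
noncomputable def towerCard : Cardinal :=
  sInf {c : Cardinal | ∃ Y : Set (Set ℕ), IsTower Y ∧ Cardinal.mk ↥Y = c}

section Aux

lemma gamma_isTau {𝒰 : Set (Set α)} (h : IsGammaCover 𝒰) : IsTauCover 𝒰 := by
  obtain ⟨hc, hinf, hg⟩ := h
  refine ⟨⟨hc, fun x => ?_⟩, fun x y => Or.inr (((hg x)).subset fun U hU => ⟨hU.1, hU.2.2⟩)⟩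
  refine (hinf.diff (hg x)).mono fun U hU => ⟨hU.1, ?_⟩
  by_contra hx
  exact hU.2 ⟨hU.1, hx⟩

lemma exists_enum {s : Set (Set α)} (hc : s.Countable) (hinf : s.Infinite) :
    ∃ e : ℕ → Set α, Function.Injective e ∧ Set.range e = s := by
  haveI := hc.to_subtype
  haveI := hinf.to_subtype
  obtain ⟨eqv⟩ : Nonempty (ℕ ≃ ↥s) := nonempty_equiv_of_countable
  exact ⟨fun k => (eqv k : Set α), Subtype.val_injective.comp eqv.injective,
    by
    ext U
    constructor
    · rintro ⟨k, rfl⟩; exact (eqv k).2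
    · intro hU; exact ⟨eqv.symm ⟨U, hU⟩, by simp⟩⟩

lemma range_gammaCover {V : ℕ → Set α} (hu : univ ∉ Set.range V)
    (hcof : ∀ x : α, {m | x ∉ V m}.Finite) : IsGammaCover (Set.range V) := by
  have hmem : ∀ x : α, ∃ m, x ∈ V m := by
    intro x
    obtain ⟨m, hm⟩ := ((hcof x).infinite_compl).nonempty
    exact ⟨m, not_not.mp hm⟩
  have hcov : ⋃₀ Set.range V = univ := by
    ext x
    simp only [mem_sUnion, mem_univ, iff_true]
    obtain ⟨m, hm⟩ := hmem x
    exact ⟨V m, mem_range_self m, hm⟩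
  have hgam : ∀ x : α, {U ∈ Set.range V | x ∉ U}.Finite := by
    intro x
    refine ((hcof x).image V).subset ?_
    rintro U ⟨⟨m, rfl⟩, hU⟩
    exact ⟨m, hU, rfl⟩
  have hinf : (Set.range V).Infinite := by
    rw [Set.infinite_coe_iff.symm.trans Set.infinite_coe_iff]
    by_contra hninf
    have hfin : (Set.range V).Finite := Set.not_infinite.mp hninf
    haveI : Finite ↥(Set.range V) := hfin.to_subtype
    obtain ⟨⟨A, hA⟩, hfib⟩ :=
      Finite.exists_infinite_fiber (fun m => (⟨V m, mem_range_self m⟩ : ↥(Set.range V)))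
    have hfib' : {m | V m = A}.Infinite := by
      have := Set.infinite_coe_iff.mp hfib
      refine this.mono fun m hm => ?_
      simpa [Subtype.ext_iff] using hm
    have hAuniv : A = univ := by
      rw [eq_univ_iff_forall]
      intro x
      obtain ⟨m, hm1, hm2⟩ := (hfib'.diff (hcof x)).nonempty
      exact hm1 ▸ not_not.mp hm2
    exact hu (hAuniv ▸ hA)
  exact ⟨⟨hcov, hu⟩, hinf, hgam⟩


/-- `interSeq e n k = e 0 k ∩ ⋯ ∩ e n k`. -/
def interSeq (e : ℕ → ℕ → Set α) : ℕ → ℕ → Set α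
  | 0 => e 0
  | (n+1) => fun k => interSeq e n k ∩ e (n+1) k

lemma interSeq_subset (e : ℕ → ℕ → Set α) : ∀ {m n : ℕ}, m ≤ n → ∀ k,
    interSeq e n k ⊆ e m k := by
  intro m n
  induction n with
  | zero => intro h k; rw [Nat.le_zero.mp h]; exact subset_rfl
  | succ n ih =>
    intro h k
    rcases eq_or_lt_of_le h with rfl | h'
    · exact inter_subset_right
    · exact (inter_subset_left).trans (ih (Nat.lt_succ_iff.mp h') k)

lemma interSeq_P (P : Set α → Prop) (hP : ∀ s t : Set α, P s → P t → P (s ∩ t))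
    (e : ℕ → ℕ → Set α) (he : ∀ m k, P (e m k)) : ∀ n k, P (interSeq e n k) := by
  intro n
  induction n with
  | zero => exact he 0
  | succ n ih => exact fun k => hP _ _ (ih k) (he (n+1) k)

lemma interSeq_notMem (e : ℕ → ℕ → Set α) {x : α} : ∀ {n k : ℕ},
    x ∉ interSeq e n k → ∃ m ≤ n, x ∉ e m k := by
  intro n
  induction n with
  | zero => exact fun {k} h => ⟨0, le_rfl, h⟩
  | succ n ih =>
    intro k h
    rw [interSeq, mem_inter_iff, not_and_or] at h
    rcases h with h | h
    · obtain ⟨m, hm, hx⟩ := ih h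
      exact ⟨m, hm.trans (Nat.le_succ n), hx⟩
    · exact ⟨n+1, le_rfl, h⟩

lemma key (P : Set α → Prop) (hP : ∀ s t : Set α, P s → P t → P (s ∩ t)) :
    S1 {𝒰 : Set (Set α) | 𝒰.Countable ∧ (∀ U ∈ 𝒰, P U) ∧ IsTauCover 𝒰}
       {𝒰 : Set (Set α) | 𝒰.Countable ∧ (∀ U ∈ 𝒰, P U) ∧ IsGammaCover 𝒰} ↔
    Binom {𝒰 : Set (Set α) | 𝒰.Countable ∧ (∀ U ∈ 𝒰, P U) ∧ IsTauCover 𝒰}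
       {𝒰 : Set (Set α) | 𝒰.Countable ∧ (∀ U ∈ 𝒰, P U) ∧ IsGammaCover 𝒰} ∧
    Sfin {𝒰 : Set (Set α) | 𝒰.Countable ∧ (∀ U ∈ 𝒰, P U) ∧ IsGammaCover 𝒰}
       {𝒰 : Set (Set α) | 𝒰.Countable ∧ (∀ U ∈ 𝒰, P U) ∧ IsTauCover 𝒰} := by
  set 𝔗 := {𝒰 : Set (Set α) | 𝒰.Countable ∧ (∀ U ∈ 𝒰, P U) ∧ IsTauCover 𝒰} with h𝔗
  set 𝔊 := {𝒰 : Set (Set α) | 𝒰.Countable ∧ (∀ U ∈ 𝒰, P U) ∧ IsGammaCover 𝒰} with h𝔊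
  have hGT : 𝔊 ⊆ 𝔗 := fun 𝒰 h𝒰 => ⟨h𝒰.1, h𝒰.2.1, gamma_isTau h𝒰.2.2⟩
  constructor
  · intro hS1
    constructor
    · -- Binom
      intro 𝒰 h𝒰
      obtain ⟨V, hV, hVg⟩ := hS1 (fun _ => 𝒰) (fun _ => h𝒰)
      exact ⟨Set.range V, range_subset_iff.mpr hV, hVg⟩
    · -- Sfin(Γ, T)
      intro 𝒰 h𝒰
      obtain ⟨V, hV, hVg⟩ := hS1 𝒰 (fun n => hGT (h𝒰 n))
      refine ⟨fun n => {V n}, fun n => ⟨finite_singleton _, singleton_subset_iff.mpr (hV n)⟩, ?_⟩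
      rw [iUnion_singleton_eq_range]
      exact hGT hVg
  · rintro ⟨hB, hSf⟩ 𝒰 h𝒰
    -- refine each τ-cover to a γ-cover
    choose 𝒱 h𝒱sub h𝒱 using fun n => hB (𝒰 n) (h𝒰 n)
    -- enumerate each γ-cover injectively
    choose e he_inj he_rng using fun n => exists_enum (h𝒱 n).1 (h𝒱 n).2.2.2.1
    have he_mem : ∀ m k, e m k ∈ 𝒱 m := fun m k => (he_rng m) ▸ mem_range_self k
    -- the intersection refinements
    set W : ℕ → ℕ → Set α := fun n => interSeq e n with hW
    have hWuniv : ∀ n, univ ∉ Set.range (W n) := by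
      rintro n ⟨k, hk⟩
      have h0 : e 0 k = univ :=
        eq_univ_of_univ_subset (hk ▸ interSeq_subset e (Nat.zero_le n) k)
      exact ((h𝒰 0).2.2.1.1.2) (h𝒱sub 0 (h0 ▸ he_mem 0 k))
    have hWcof : ∀ n (x : α), {k | x ∉ W n k}.Finite := by
      intro n x
      have hsub : {k | x ∉ W n k} ⊆ ⋃ m ∈ Finset.range (n+1), (e m) ⁻¹' {U | x ∉ U} := by
        intro k hk
        obtain ⟨m, hm, hx⟩ := interSeq_notMem e hk
        simp only [mem_iUnion, Finset.mem_range]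
        exact ⟨m, Nat.lt_succ_of_le hm, hx⟩
      refine (Set.Finite.biUnion (Finset.range (n+1)).finite_toSet fun m _ => ?_).subset hsub
      have : (e m) ⁻¹' {U | x ∉ U} = (e m) ⁻¹' {U ∈ 𝒱 m | x ∉ U} := by
        ext k; simp [he_mem m k]
      rw [this]
      exact ((h𝒱 m).2.2.2.2 x).preimage ((he_inj m).injOn)
    have hWG : ∀ n, Set.range (W n) ∈ 𝔊 := by
      intro n
      refine ⟨countable_range _, ?_, range_gammaCover (hWuniv n) (hWcof n)⟩
      rintro U ⟨k, rfl⟩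
      exact interSeq_P P hP e (fun m k => (h𝒱 m).2.1 _ (he_mem m k)) n k
    -- apply Sfin(Γ,T), then Binom
    obtain ⟨F, hF, hFT⟩ := hSf (fun n => Set.range (W n)) hWG
    obtain ⟨𝒲, h𝒲sub, h𝒲⟩ := hB _ hFT
    -- choose indices
    have hchoice : ∀ A : Set α, ∃ n k, A ∈ 𝒲 → A ∈ F n ∧ W n k = A := by
      intro A
      by_cases hA : A ∈ 𝒲
      · obtain ⟨n, hn⟩ := mem_iUnion.mp (h𝒲sub hA)
        obtain ⟨k, hk⟩ := (hF n).2 hn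
        exact ⟨n, k, fun _ => ⟨hn, hk⟩⟩
      · exact ⟨0, 0, fun h => absurd h hA⟩
    choose nOf kOf hnk using hchoice
    have h𝒲inf : 𝒲.Infinite := h𝒲.2.2.2.1
    have hstep : ∀ N : ℕ, ∃ A, A ∈ 𝒲 ∧ N < nOf A := by
      intro N
      have hfin : {A ∈ 𝒲 | nOf A ≤ N}.Finite := by
        refine (Set.Finite.biUnion (Finset.range (N+1)).finite_toSet fun n _ => (hF n).1).subset ?_
        rintro A ⟨hA, hle⟩
        simp only [mem_iUnion, Finset.coe_range, mem_Iio]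
        exact ⟨nOf A, Nat.lt_succ_of_le hle, (hnk A hA).1⟩
      obtain ⟨A, hA, hA2⟩ := (h𝒲inf.diff hfin).nonempty
      exact ⟨A, hA, by by_contra h; exact hA2 ⟨hA, Nat.le_of_not_lt h⟩⟩
    -- the increasing sequence
    set a : ℕ → Set α := fun j =>
      Nat.rec (hstep 0).choose (fun _ prev => (hstep (nOf prev)).choose) j with ha
    have ha𝒲 : ∀ j, a j ∈ 𝒲 := by
      intro j
      induction j with
      | zero => exact (hstep 0).choose_spec.1
      | succ j _ => exact (hstep (nOf (a j))).choose_spec.1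
    have hamono : StrictMono (fun j => nOf (a j)) := by
      refine strictMono_nat_of_lt_succ fun j => ?_
      exact (hstep (nOf (a j))).choose_spec.2
    have haex : ∀ m : ℕ, ∃ j, m ≤ nOf (a j) := fun m => ⟨m, hamono.le_apply⟩
    -- the selection
    set V : ℕ → Set α := fun m => e m (kOf (a (Nat.find (haex m)))) with hV
    have hVsubW : ∀ m, a (Nat.find (haex m)) ⊆ V m := by
      intro m
      set j := Nat.find (haex m)
      have h1 : m ≤ nOf (a j) := Nat.find_spec (haex m)
      have h2 : W (nOf (a j)) (kOf (a j)) = a j := (hnk _ (ha𝒲 j)).2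
      exact h2 ▸ interSeq_subset e h1 (kOf (a j))
    have hVmem : ∀ m, V m ∈ 𝒰 m := fun m => h𝒱sub m (he_mem m _)
    refine ⟨V, hVmem, ?_⟩
    have hVuniv : univ ∉ Set.range V := by
      rintro ⟨m, hm⟩
      exact ((h𝒰 m).2.2.1.1.2) (hm ▸ hVmem m)
    have hVcof : ∀ x : α, {m | x ∉ V m}.Finite := by
      intro x
      have hbadA : {A ∈ 𝒲 | x ∉ A}.Finite := h𝒲.2.2.2.2 x
      have hainj : Function.Injective a := fun i j hij => hamono.injective (by rw [hij])
      have hJ : {j | x ∉ a j}.Finite := by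
        refine (hbadA.preimage hainj.injOn).subset fun j hj => ?_
        exact ⟨ha𝒲 j, hj⟩
      have hfinU : (⋃ j ∈ {j | x ∉ a j}, {m | Nat.find (haex m) = j}).Finite := by
        refine Set.Finite.biUnion hJ fun j _ => ?_
        refine (Set.finite_Iic (nOf (a j))).subset fun m hm => ?_
        have h := Nat.find_spec (haex m)
        rw [hm] at h
        exact h
      refine hfinU.subset fun m hm => ?_
      simp only [mem_iUnion]
      exact ⟨Nat.find (haex m), fun hx => hm (hVsubW m hx), rfl⟩
    refine ⟨countable_range _, ?_, range_gammaCover hVuniv hVcof⟩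
    rintro U ⟨m, rfl⟩
    exact (h𝒰 m).2.1 _ (hVmem m)


end Aux

/-- `S₁(T,Γ) = binom(T,Γ) ∩ Sfin(Γ,T)`, and the Borel analogue. -/
theorem statement2 (X : Set ℝ) (hX : X.Infinite) :
    (S1 (OpenTau ↥X) (OpenGamma ↥X) ↔
      Binom (OpenTau ↥X) (OpenGamma ↥X) ∧ Sfin (OpenGamma ↥X) (OpenTau ↥X)) ∧
    (S1 (BorelTau ↥X) (BorelGamma ↥X) ↔
      Binom (BorelTau ↥X) (BorelGamma ↥X) ∧ Sfin (BorelGamma ↥X) (BorelTau ↥X)) :=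
  ⟨key IsOpen fun _ _ hs ht => hs.inter ht,
   key MeasurableSet fun _ _ hs ht => hs.inter ht⟩

end TauCoverPaper
end

section
/- For every infinite set of real numbers X: (1) X satisfies S₁(Ω,Γ) if and only if X satisfies both binom(T,Γ) and Sfin(Ω,T); (2) X satisfies S₁(B_Ω,B_Γ) if and only if X satisfies both binom(B_T,B_Γ) and Sfin(B_Ω,B_T). -/
open Set

namespace TauCoverPaper

variable {α : Type}

def countableCovers (P : Set α → Prop) (C : Set (Set α) → Prop) : Set (Set (Set α)) :=
  {𝒰 | 𝒰.Countable ∧ (∀ U ∈ 𝒰, P U) ∧ C 𝒰}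

lemma countableCovers_mono {P : Set α → Prop} {C C' : Set (Set α) → Prop}
    (h : ∀ 𝒰, C 𝒰 → C' 𝒰) : countableCovers P C ⊆ countableCovers P C' :=
  fun _ ⟨hc, hP, hC⟩ => ⟨hc, hP, h _ hC⟩

section SelectionPrinciples

variable {𝔘 𝔘' 𝔙 𝔙' : Set (Set (Set α))}

lemma S1.binom (h : S1 𝔘 𝔙) : Binom 𝔘 𝔙 := fun 𝒰 h𝒰 =>
  let ⟨V, hV, hV𝔙⟩ := h (fun _ => 𝒰) (fun _ => h𝒰)
  ⟨range V, range_subset_iff.2 hV, hV𝔙⟩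

lemma S1.sfin (h : S1 𝔘 𝔙) : Sfin 𝔘 𝔙 := fun 𝒰 h𝒰 =>
  let ⟨V, hV, hV𝔙⟩ := h 𝒰 h𝒰
  ⟨fun n => {V n}, fun n => ⟨finite_singleton _, singleton_subset_iff.2 (hV n)⟩,
    by rwa [iUnion_singleton_eq_range]⟩

lemma Binom.mono_left (h : Binom 𝔘 𝔙) (h𝔘 : 𝔘' ⊆ 𝔘) : Binom 𝔘' 𝔙 :=
  fun 𝒰 h𝒰 => h 𝒰 (h𝔘 h𝒰)

lemma Sfin.mono_right (h : Sfin 𝔘 𝔙) (h𝔙 : 𝔙 ⊆ 𝔙') : Sfin 𝔘 𝔙' := fun 𝒰 h𝒰 =>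
  let ⟨F, hF, hF𝔙⟩ := h 𝒰 h𝒰
  ⟨F, hF, h𝔙 hF𝔙⟩

end SelectionPrinciples

section Covers

variable {𝒰 𝒱 : Set (Set α)}

lemma IsGammaCover.isTauCover (h : IsGammaCover 𝒰) : IsTauCover 𝒰 := by
  obtain ⟨hcov, hinf, hγ⟩ := h
  refine ⟨⟨hcov, fun x => ?_⟩, fun x y => .inl ((hγ y).subset fun U hU => ⟨hU.1, hU.2.2⟩)⟩
  exact (hinf.sdiff (hγ x)).mono fun U hU => ⟨hU.1, not_not.1 fun hx => hU.2 ⟨hU.1, hx⟩⟩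

/-- `x` is a least point of `F` for the preorder `x ≼ y ↔ {U | x ∈ U ∧ y ∉ U}.Finite`, except
that it may lie outside `F`, so that the induction can start at `F = ∅`. -/
lemma IsTauCover.exists_finite_setOf_mem_not_subset [Nonempty α] (h : IsTauCover 𝒰)
    {F : Set α} (hF : F.Finite) : ∃ x, {U ∈ 𝒰 | x ∈ U ∧ ¬F ⊆ U}.Finite := by
  induction F, hF using Set.Finite.induction_on with
  | empty => exact ⟨Classical.arbitrary α, by simp⟩
  | @insert y F _ _ ih =>
    obtain ⟨x, hx⟩ := ih
    rcases h.2 x y with hxy | hyx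
    · refine ⟨x, (hx.union hxy).subset fun U ⟨hU, hxU, hFU⟩ => ?_⟩
      by_cases hyU : y ∈ U
      · exact .inl ⟨hU, hxU, fun hF => hFU (insert_subset hyU hF)⟩
      · exact .inr ⟨hU, hxU, hyU⟩
    · refine ⟨y, (hyx.union hx).subset fun U ⟨hU, hyU, hFU⟩ => ?_⟩
      by_cases hxU : x ∈ U
      · exact .inr ⟨hU, hxU, fun hF => hFU (insert_subset hyU hF)⟩
      · exact .inl ⟨hU, hyU, hxU⟩

lemma IsTauCover.isOmegaCover [Nonempty α] (h : IsTauCover 𝒰) : IsOmegaCover 𝒰 := by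
  refine ⟨h.1.1, fun F hF => ?_⟩
  obtain ⟨x, hx⟩ := h.exists_finite_setOf_mem_not_subset hF
  obtain ⟨U, ⟨hU, hxU⟩, hFU⟩ := ((h.1.2 x).sdiff hx).nonempty
  exact ⟨U, hU, not_not.1 fun hF => hFU ⟨hU, hxU, hF⟩⟩

lemma IsGammaCover.finite_setOf_notMem {ι : Type*} (h : IsGammaCover 𝒱) {V : ι → Set α}
    (hV : ∀ i, V i ∈ 𝒱) (hfib : ∀ W, (V ⁻¹' {W}).Finite) (x : α) :
    {i | x ∉ V i}.Finite :=
  ((h.2.2 x).preimage' fun W _ => hfib W).subset fun i hi => ⟨hV i, hi⟩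

lemma isGammaCover_range {ι : Type*} [Infinite ι] {U : ι → Set α} (hne : ∀ i, U i ≠ univ)
    (hfin : ∀ x, {i | x ∉ U i}.Finite) : IsGammaCover (range U) := by
  refine ⟨⟨eq_univ_of_forall fun x => ?_, fun ⟨i, hi⟩ => hne i hi⟩, fun hrange => ?_,
    fun x => ((hfin x).image U).subset ?_⟩
  · obtain ⟨i, hi⟩ := (hfin x).infinite_compl.nonempty
    exact ⟨U i, mem_range_self i, not_not.1 hi⟩
  · have hwit : ∀ W ∈ range U, ∃ x, x ∉ W := by
      rintro _ ⟨i, rfl⟩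
      simpa [eq_univ_iff_forall] using hne i
    choose p hp using hwit
    refine infinite_univ ((hrange.biUnion' fun W hW => hfin (p W hW)).subset fun i _ => ?_)
    exact mem_iUnion₂.2 ⟨U i, mem_range_self i, hp _ (mem_range_self i)⟩
  · rintro _ ⟨⟨i, rfl⟩, hx⟩
    exact ⟨i, hx, rfl⟩

end Covers

def interUpTo (𝒰 : ℕ → Set (Set α)) : ℕ → Set (Set α)
  | 0 => 𝒰 0
  | n + 1 => image2 (· ∩ ·) (interUpTo 𝒰 n) (𝒰 (n + 1))

section InterUpTo

variable {𝒰 : ℕ → Set (Set α)}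

lemma countable_interUpTo (h : ∀ n, (𝒰 n).Countable) (n : ℕ) : (interUpTo 𝒰 n).Countable := by
  induction n with
  | zero => exact h 0
  | succ n ih => exact ih.image2 (h (n + 1)) _

lemma forall_mem_interUpTo {P : Set α → Prop} (hP : ∀ s t, P s → P t → P (s ∩ t))
    (h : ∀ n, ∀ U ∈ 𝒰 n, P U) (n : ℕ) : ∀ s ∈ interUpTo 𝒰 n, P s := by
  induction n with
  | zero => exact h 0
  | succ n ih =>
    rintro _ ⟨t, ht, u, hu, rfl⟩
    exact hP t u (ih t ht) (h (n + 1) u hu)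

lemma exists_superset_of_mem_interUpTo {n : ℕ} {s : Set α} (hs : s ∈ interUpTo 𝒰 n) {i : ℕ}
    (hi : i ≤ n) : ∃ U ∈ 𝒰 i, s ⊆ U := by
  induction n generalizing s with
  | zero => exact Nat.le_zero.1 hi ▸ ⟨s, hs, subset_rfl⟩
  | succ n ih =>
    obtain ⟨t, ht, u, hu, rfl⟩ := hs
    rcases Nat.le_succ_iff_eq_or_le.1 hi with rfl | hi
    · exact ⟨u, hu, inter_subset_right⟩
    · obtain ⟨U, hU, htU⟩ := ih ht hi
      exact ⟨U, hU, inter_subset_left.trans htU⟩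

lemma isOmegaCover_interUpTo (h : ∀ n, IsOmegaCover (𝒰 n)) (n : ℕ) :
    IsOmegaCover (interUpTo 𝒰 n) := by
  have hsup : ∀ F : Set α, F.Finite → ∃ s ∈ interUpTo 𝒰 n, F ⊆ s := by
    induction n with
    | zero => exact (h 0).2
    | succ n ih =>
      intro F hF
      obtain ⟨t, ht, hFt⟩ := ih F hF
      obtain ⟨u, hu, hFu⟩ := (h (n + 1)).2 F hF
      exact ⟨t ∩ u, mem_image2_of_mem ht hu, subset_inter hFt hFu⟩
  refine ⟨⟨eq_univ_of_forall fun x => ?_, fun huniv => ?_⟩, hsup⟩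
  · obtain ⟨s, hs, hxs⟩ := hsup {x} (finite_singleton x)
    exact ⟨s, hs, hxs rfl⟩
  · obtain ⟨U, hU, hU'⟩ := exists_superset_of_mem_interUpTo huniv (Nat.zero_le n)
    exact (h 0).1.2 (univ_subset_iff.1 hU' ▸ hU)

lemma interUpTo_mem_countableCovers {P : Set α → Prop} (hP : ∀ s t, P s → P t → P (s ∩ t))
    (h : ∀ n, 𝒰 n ∈ countableCovers P IsOmegaCover) (n : ℕ) :
    interUpTo 𝒰 n ∈ countableCovers P IsOmegaCover :=
  ⟨countable_interUpTo (fun k => (h k).1) n, forall_mem_interUpTo hP (fun k => (h k).2.1) n,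
    isOmegaCover_interUpTo (fun k => (h k).2.2) n⟩

end InterUpTo

section Main

variable {P : Set α → Prop}

/-- Apply `Sfin(Ω,T)` to the refinements `interUpTo 𝒰 n` and `binom(T,Γ)` to the resulting
τ-cover; from the γ-subcover pick, for each `n`, a member `Vₙ` first selected at a stage `≥ n`.
Then `Vₙ` refines a member of `𝒰 n`, and `n ↦ Vₙ` is finite-to-one, so these members form a
γ-cover. -/
theorem s1_omega_gamma_of_binom_of_sfin (hP : ∀ s t, P s → P t → P (s ∩ t))
    (hbinom : Binom (countableCovers P IsTauCover) (countableCovers P IsGammaCover))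
    (hsfin : Sfin (countableCovers P IsOmegaCover) (countableCovers P IsTauCover)) :
    S1 (countableCovers P IsOmegaCover) (countableCovers P IsGammaCover) := by
  intro 𝒰 h𝒰
  obtain ⟨F, hF, hτ⟩ := hsfin (interUpTo 𝒰) (interUpTo_mem_countableCovers hP h𝒰)
  obtain ⟨𝒱, h𝒱F, -, -, h𝒱⟩ := hbinom _ hτ
  have hnew : ∀ n, ∃ V ∈ 𝒱, ∀ k < n, V ∉ F k := fun n => by
    obtain ⟨V, hV, hVF⟩ :=
      (h𝒱.2.1.sdiff ((finite_lt_nat n).biUnion fun k _ => (hF k).1)).nonempty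
    exact ⟨V, hV, fun k hk hVk => hVF (mem_biUnion hk hVk)⟩
  choose V hV𝒱 hVnew using hnew
  choose m hm using fun n => mem_iUnion.1 (h𝒱F (hV𝒱 n))
  have hfib : ∀ W, (V ⁻¹' {W}).Finite := by
    intro W
    by_cases hW : ∃ k, W ∈ F k
    · obtain ⟨k, hk⟩ := hW
      exact (finite_Iic k).subset fun n (hn : V n = W) =>
        not_lt.1 fun hkn => hVnew n k hkn (hn ▸ hk)
    · exact finite_empty.subset fun n (hn : V n = W) => hW ⟨m n, hn ▸ hm n⟩
  have hrefine : ∀ n, ∃ U ∈ 𝒰 n, V n ⊆ U := fun n =>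
    exists_superset_of_mem_interUpTo ((hF (m n)).2 (hm n))
      (not_lt.1 fun hmn => hVnew n (m n) hmn (hm n))
  choose U hU hVU using hrefine
  refine ⟨U, hU, countable_range U, forall_mem_range.2 fun n => (h𝒰 n).2.1 _ (hU n),
    isGammaCover_range (fun n hn => (h𝒰 n).2.2.1.2 (hn ▸ hU n)) fun x => ?_⟩
  exact (h𝒱.finite_setOf_notMem hV𝒱 hfib x).subset fun n hxU hxV => hxU (hVU n hxV)

theorem s1_omega_gamma_iff [Nonempty α] (hP : ∀ s t, P s → P t → P (s ∩ t)) :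
    S1 (countableCovers P IsOmegaCover) (countableCovers P IsGammaCover) ↔
      Binom (countableCovers P IsTauCover) (countableCovers P IsGammaCover) ∧
        Sfin (countableCovers P IsOmegaCover) (countableCovers P IsTauCover) :=
  ⟨fun h => ⟨h.binom.mono_left (countableCovers_mono fun _ => IsTauCover.isOmegaCover),
      h.sfin.mono_right (countableCovers_mono fun _ => IsGammaCover.isTauCover)⟩,
    fun ⟨hbinom, hsfin⟩ => s1_omega_gamma_of_binom_of_sfin hP hbinom hsfin⟩

end Main

/-- `S₁(Ω,Γ) = binom(T,Γ) ∩ Sfin(Ω,T)`, and the Borel analogue. -/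
theorem statement4 (X : Set ℝ) (hX : X.Infinite) :
    (S1 (OpenOmega ↥X) (OpenGamma ↥X) ↔
      Binom (OpenTau ↥X) (OpenGamma ↥X) ∧ Sfin (OpenOmega ↥X) (OpenTau ↥X)) ∧
    (S1 (BorelOmega ↥X) (BorelGamma ↥X) ↔
      Binom (BorelTau ↥X) (BorelGamma ↥X) ∧ Sfin (BorelOmega ↥X) (BorelTau ↥X)) := by
  have : Nonempty X := hX.nonempty.to_subtype
  exact ⟨s1_omega_gamma_iff fun _ _ => IsOpen.inter,
    s1_omega_gamma_iff fun _ _ => MeasurableSet.inter⟩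

end TauCoverPaper
end

section
/- Let X be an infinite set of real numbers and let 𝒱 be a countable τ-cover of X. Define the quasiorder ≼ on X induced by 𝒱 by: x ≼ y if and only if the set {V ∈ 𝒱 : x ∈ V and y ∉ V} is finite. If ⟨X,≼⟩ has a least element x₀ (that is, x₀ ≼ x for all x ∈ X), then the subfamily {V ∈ 𝒱 : x₀ ∈ V} is a γ-cover of X; in particular, 𝒱 contains a γ-cover of X. -/
open Set

namespace TauCoverPaper

variable {α : Type}

/-- If the quasiorder induced on `X` by a countable τ-cover `𝒱` has a least
element `x₀`, then `{V ∈ 𝒱 | x₀ ∈ V}` is a γ-cover of `X`; in particular `𝒱`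
contains a γ-cover of `X`. -/
theorem statement6 (X : Set ℝ) (hX : X.Infinite) (𝒱 : Set (Set ↥X))
    (hc : 𝒱.Countable) (hτ : IsTauCover 𝒱) (x₀ : ↥X)
    (hleast : ∀ x : ↥X, {V ∈ 𝒱 | x₀ ∈ V ∧ x ∉ V}.Finite) :
    IsGammaCover {V ∈ 𝒱 | x₀ ∈ V} ∧ ∃ 𝒲 ⊆ 𝒱, IsGammaCover 𝒲 := by
  obtain ⟨⟨⟨hcov, hnotuniv⟩, hlarge⟩, htau⟩ := hτ
  have hWinf : {V ∈ 𝒱 | x₀ ∈ V}.Infinite := hlarge x₀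
  have hgamma : IsGammaCover {V ∈ 𝒱 | x₀ ∈ V} := by
    refine ⟨⟨?_, ?_⟩, hWinf, ?_⟩
    · apply eq_univ_of_forall
      intro x
      have hfin := hleast x
      have hdi : ({V ∈ 𝒱 | x₀ ∈ V} \ {V ∈ 𝒱 | x₀ ∈ V ∧ x ∉ V}).Infinite :=
        hWinf.diff hfin
      obtain ⟨V, hV⟩ := hdi.nonempty
      rcases hV with ⟨⟨hV𝒱, hx₀⟩, hnot⟩
      have hxV : x ∈ V := by
        by_contra h
        exact hnot ⟨hV𝒱, hx₀, h⟩
      exact ⟨V, ⟨hV𝒱, hx₀⟩, hxV⟩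
    · intro h; exact hnotuniv h.1
    · intro x
      have hsub : {V ∈ {V ∈ 𝒱 | x₀ ∈ V} | x ∉ V} ⊆ {V ∈ 𝒱 | x₀ ∈ V ∧ x ∉ V} := by
        rintro V ⟨⟨h1, h2⟩, h3⟩; exact ⟨h1, h2, h3⟩
      exact (hleast x).subset hsub
  exact ⟨hgamma, _, fun V hV => hV.1, hgamma⟩

end TauCoverPaper
end

section
/- For every infinite set of real numbers X, the following are equivalent: (1) X satisfies binom(B_T,B_Γ), that is, every countable Borel τ-cover of X contains a γ-cover of X; (2) no Borel image of X in [ℕ]^∞ is a tower. -/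
open Set

namespace TauCoverPaper

variable {α : Type}

/-- Forward core: from binom(B_T,B_Gamma) every Borel linearly quasiordered family
of infinite sets has a pseudo-intersection. -/
theorem forward_core {α : Type} [MeasurableSpace α]
    (hB : Binom (BorelTau α) (BorelGamma α))
    (f : α → Set ℕ) (hfB : BorelMeasSets f) (hfI : ∀ x, (f x).Infinite)
    (hlin : ∀ x y, AlmostSubset (f x) (f y) ∨ AlmostSubset (f y) (f x)) :
    ∃ a, PseudoIntersection a (Set.range f) := by
  classical
  set U : ℕ → Set α := fun n => {x | n ∈ f x} with hUdef
  by_cases ha : {n | U n = univ}.Infinite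
  · refine ⟨{n | U n = univ}, ha, ?_⟩
    rintro b ⟨x, rfl⟩
    have h0 : {n | U n = univ} \ f x = ∅ := by
      ext n
      simp only [mem_diff, mem_setOf_eq, mem_empty_iff_false, iff_false, not_and, not_not]
      intro hn
      exact (hn ▸ mem_univ x : x ∈ U n)
    rw [AlmostSubset, h0]
    exact finite_empty
  have ha' : {n | U n = univ}.Finite := not_infinite.mp ha
  set I : Set ℕ := {n | U n ≠ ∅ ∧ U n ≠ univ ∧ ∀ m, U m = U n → n ≤ m} with hIdef
  set cls : ℕ → Set ℕ := fun n => {m | U m = U n} with hclsdef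
  set ftil : α → Set ℕ := fun x => {n | n ∈ I ∧ x ∈ U n} with hftildef
  have hrep : ∀ m, U m ≠ ∅ → U m ≠ univ → ∃ n, n ∈ I ∧ U n = U m := by
    intro m h1 h2
    have hex : ∃ k, U k = U m := ⟨m, rfl⟩
    refine ⟨Nat.find hex, ⟨?_, ?_, ?_⟩, Nat.find_spec hex⟩
    · rw [Nat.find_spec hex]; exact h1
    · rw [Nat.find_spec hex]; exact h2
    · intro k hk
      exact Nat.find_min' hex (hk.trans (Nat.find_spec hex))
  have hinjI : Set.InjOn U I := by
    intro n hn m hm h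
    exact le_antisymm (hn.2.2 m h.symm) (hm.2.2 n h)
  have hclsSub : ∀ (n : ℕ) (x : α), x ∈ U n → cls n ⊆ f x := by
    intro n x hx m hm
    exact (by rw [show U m = U n from hm]; exact hx : x ∈ U m)
  have hclsDich : ∀ (n : ℕ) (z : α), cls n ⊆ f z ∨ cls n ∩ f z = ∅ := by
    intro n z
    by_cases h : z ∈ U n
    · exact Or.inl (hclsSub n z h)
    · right
      ext m
      simp only [mem_inter_iff, mem_empty_iff_false, iff_false, not_and]
      intro hm hmz
      exact h (by rw [← show U m = U n from hm]; exact hmz)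
  have hcovidx : ∀ x : α, f x \ {n | U n = univ} ⊆ ⋃ n ∈ ftil x, cls n := by
    intro x m hm
    have hx : x ∈ U m := hm.1
    have h1 : U m ≠ ∅ := nonempty_iff_ne_empty.mp ⟨x, hx⟩
    obtain ⟨n, hnI, hnm⟩ := hrep m h1 hm.2
    have hnf : n ∈ ftil x := ⟨hnI, by rw [hnm]; exact hx⟩
    exact mem_biUnion hnf (hnm.symm : U m = U n)
  by_cases hbad : ∃ x, (ftil x).Finite
  · -- degenerate case: some point sees only finitely many distinct sets;
    -- produce a ⊆*-least element of the family
    set Tset : α → Set ℕ := fun x => {n | n ∈ ftil x ∧ (cls n).Infinite} with hTdef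
    have hTsub : ∀ x, Tset x ⊆ ftil x := fun x n hn => hn.1
    obtain ⟨x₀, hx₀⟩ := hbad
    have hex : ∃ k, ∃ x : α, (ftil x).Finite ∧ (Tset x).ncard = k := ⟨_, x₀, hx₀, rfl⟩
    obtain ⟨xs, hxfin, hxcard⟩ := Nat.find_spec hex
    have hmain : ∀ z, AlmostSubset (f xs) (f z) := by
      intro z
      by_contra hcon
      have hzx : AlmostSubset (f z) (f xs) := (hlin xs z).resolve_left hcon
      have hdiffinf : (f xs \ f z).Infinite := hcon
      have hsubun : f xs \ f z ⊆ {n | U n = univ} ∪ ⋃ n ∈ ftil xs, (cls n \ f z) := by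
        intro m hm
        by_cases hmu : U m = univ
        · exact Or.inl hmu
        · right
          obtain ⟨n, hn, hmn⟩ := mem_iUnion₂.mp (hcovidx xs ⟨hm.1, hmu⟩)
          exact mem_iUnion₂.mpr ⟨n, hn, hmn, hm.2⟩
      have hUnInf : ¬ (⋃ n ∈ ftil xs, (cls n \ f z)).Finite := by
        intro hfin
        exact hdiffinf ((ha'.union hfin).subset hsubun)
      obtain ⟨n0, hn0mem, hn0inf⟩ : ∃ n ∈ ftil xs, ¬(cls n \ f z).Finite := by
        by_contra h
        push_neg at h
        exact hUnInf (hxfin.biUnion h)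
      have hn0T : n0 ∈ Tset xs :=
        ⟨hn0mem, fun hfin => hn0inf (hfin.subset diff_subset)⟩
      have hn0disj : cls n0 ∩ f z = ∅ := by
        refine (hclsDich n0 z).resolve_left ?_
        intro hsub
        exact hn0inf (by rw [diff_eq_empty.mpr hsub]; exact finite_empty)
      set G : Set ℕ := {n | U n = univ} ∪ ⋃ n ∈ ftil xs, cls n with hGdef
      have hxsG : f xs ⊆ G := by
        intro m hm
        by_cases hmu : U m = univ
        · exact Or.inl hmu
        · exact Or.inr (hcovidx xs ⟨hm, hmu⟩)
      have hGfin : (f z \ G).Finite := by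
        apply hzx.subset
        intro m hm
        exact ⟨hm.1, fun hfx => hm.2 (hxsG hfx)⟩
      have hTzsub : Tset z ⊆ Tset xs \ {n0} := by
        rintro m ⟨⟨hmI, hmz⟩, hminf⟩
        have hclsmz : cls m ⊆ f z := hclsSub m z hmz
        have h2 : (cls m \ G).Finite :=
          hGfin.subset (fun m' hm' => ⟨hclsmz hm'.1, hm'.2⟩)
        have h1 : (cls m ∩ G).Infinite := by
          apply (hminf.diff h2).mono ?_ |>.mono subset_rfl
          intro m' hm'
          refine ⟨hm'.1, ?_⟩
          by_contra hng
          exact hm'.2 ⟨hm'.1, hng⟩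
        have h3 : (cls m ∩ ⋃ n ∈ ftil xs, cls n).Nonempty := by
          have hinf2 : ((cls m ∩ G) \ {n | U n = univ}).Infinite := h1.diff ha'
          obtain ⟨m', hm'⟩ := hinf2.nonempty
          rcases hm'.1.2 with h | h
          · exact absurd h hm'.2
          · exact ⟨m', hm'.1.1, h⟩
        obtain ⟨m', hm'1, hm'2⟩ := h3
        obtain ⟨n, hn, hm'n⟩ := mem_iUnion₂.mp hm'2
        have hUmn : U m = U n := (hm'1 : U m' = U m).symm.trans (hm'n : U m' = U n)
        have hmn : m = n := hinjI hmI hn.1 hUmn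
        have hmftil : m ∈ ftil xs := ⟨hmI, by rw [hUmn]; exact hn.2⟩
        have hmne : m ≠ n0 := by
          intro hEq
          have hmm : (n0 : ℕ) ∈ cls n0 ∩ f z := ⟨rfl, (hEq ▸ hclsmz) rfl⟩
          rw [hn0disj] at hmm
          exact hmm
        exact ⟨⟨hmftil, hminf⟩, hmne⟩
      have hTzfin : (Tset z).Finite :=
        (hxfin.subset (hTsub xs)).subset (hTzsub.trans diff_subset)
      have hFfin : {m | m ∈ ftil z ∧ ¬(cls m).Infinite}.Finite := by
        apply ((hGfin.union ha').union hxfin).subset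
        rintro m ⟨⟨hmI, hmz⟩, -⟩
        have hmfz : m ∈ f z := hclsSub m z hmz rfl
        by_cases hmG : m ∈ G
        · rcases hmG with h | h
          · exact Or.inl (Or.inr h)
          · obtain ⟨n, hn, hmn⟩ := mem_iUnion₂.mp h
            have he : m = n := hinjI hmI hn.1 hmn
            exact Or.inr (he ▸ hn)
        · exact Or.inl (Or.inl ⟨hmfz, hmG⟩)
      have hftilz : (ftil z).Finite := by
        apply (hTzfin.union hFfin).subset
        intro m hm
        by_cases h : (cls m).Infinite
        · exact Or.inl ⟨hm, h⟩
        · exact Or.inr ⟨hm, h⟩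
      have hne : n0 ∉ Tset z := fun h => (hTzsub h).2 rfl
      have hss : Tset z ⊂ Tset xs :=
        (hTzsub.trans diff_subset).ssubset_of_ne
          (fun h => hne (h.symm ▸ hn0T))
      have hcard : (Tset z).ncard < Nat.find hex := by
        rw [← hxcard]
        exact Set.ncard_lt_ncard hss (hxfin.subset (hTsub xs))
      exact Nat.find_min hex hcard ⟨z, hftilz, rfl⟩
    exact ⟨f xs, hfI xs, by rintro b ⟨w, rfl⟩; exact hmain w⟩
  · -- nondegenerate case: build a tau-cover and apply binom
    push_neg at hbad
    have hbad' : ∀ x, (ftil x).Infinite := hbad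
    set 𝒰 : Set (Set α) := U '' I with h𝒰def
    have h𝒰mem : 𝒰 ∈ BorelTau α := by
      refine ⟨(Set.to_countable I).image U, ?_, ⟨⟨?_, ?_⟩, ?_⟩, ?_⟩
      · rintro V ⟨n, hn, rfl⟩
        exact hfB n
      · apply eq_univ_of_forall
        intro x
        obtain ⟨n, hn⟩ := (hbad' x).nonempty
        exact ⟨U n, ⟨n, hn.1, rfl⟩, hn.2⟩
      · rintro ⟨n, hn, hUn⟩
        exact hn.2.1 hUn
      · intro x
        have h1 : (U '' ftil x).Infinite :=
          (Set.infinite_image_iff (hinjI.mono (fun n hn => hn.1))).mpr (hbad' x)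
        apply h1.mono
        rintro V ⟨n, hn, rfl⟩
        exact ⟨⟨n, hn.1, rfl⟩, hn.2⟩
      · intro x y
        rcases hlin x y with h | h
        · left
          apply (h.image U).subset
          rintro V ⟨⟨n, hnI, rfl⟩, hxV, hyV⟩
          exact ⟨n, ⟨hxV, hyV⟩, rfl⟩
        · right
          apply (h.image U).subset
          rintro V ⟨⟨n, hnI, rfl⟩, hyV, hxV⟩
          exact ⟨n, ⟨hyV, hxV⟩, rfl⟩
    obtain ⟨𝒱, h𝒱sub, h𝒱cnt, h𝒱meas, h𝒱cov, h𝒱inf, h𝒱gam⟩ := hB 𝒰 h𝒰mem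
    set c : Set ℕ := {n | n ∈ I ∧ U n ∈ 𝒱} with hcdef
    have hcim : 𝒱 = U '' c := by
      ext V
      constructor
      · intro hV
        obtain ⟨n, hnI, rfl⟩ := h𝒱sub hV
        exact ⟨n, ⟨hnI, hV⟩, rfl⟩
      · rintro ⟨n, hn, rfl⟩
        exact hn.2
    have hcinf : c.Infinite := by
      intro hcfin
      exact h𝒱inf (hcim ▸ hcfin.image U)
    refine ⟨c, hcinf, ?_⟩
    rintro b ⟨x, rfl⟩
    have him : (U '' (c \ f x)).Finite := by
      apply (h𝒱gam x).subset
      rintro V ⟨n, ⟨⟨hnI, hnV⟩, hnfx⟩, rfl⟩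
      exact ⟨hnV, hnfx⟩
    exact him.of_finite_image (hinjI.mono (fun n hn => hn.1.1))

/-- Backward core. -/
theorem backward_core {α : Type} [MeasurableSpace α] (x0 : α)
    (hR : ∀ f : α → Set ℕ, BorelMeasSets f → (∀ x, (f x).Infinite) →
        ¬ IsTower (Set.range f)) :
    Binom (BorelTau α) (BorelGamma α) := by
  classical
  rintro 𝒰 ⟨hcnt, hmeas, ⟨⟨hcov, hnu⟩, hlarge⟩, htau⟩
  have h𝒰inf : 𝒰.Infinite := (hlarge x0).mono (sep_subset _ _)
  haveI := hcnt.to_subtype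
  haveI := h𝒰inf.to_subtype
  obtain ⟨D⟩ := nonempty_denumerable ↥𝒰
  set e : ℕ ≃ ↥𝒰 := (Denumerable.eqv ↥𝒰).symm with hedef
  set U : ℕ → Set α := fun n => (e n : Set α) with hUdef
  have hUinj : Function.Injective U := fun n m h => e.injective (Subtype.ext h)
  have hUrange : ∀ n, U n ∈ 𝒰 := fun n => (e n).2
  have hUsurj : ∀ V ∈ 𝒰, ∃ n, U n = V := by
    intro V hV
    refine ⟨e.symm ⟨V, hV⟩, ?_⟩
    show ((e (e.symm ⟨V, hV⟩) : ↥𝒰) : Set α) = V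
    rw [e.apply_symm_apply]
  set f : α → Set ℕ := fun x => {n | x ∈ U n} with hfdef
  have hfB : BorelMeasSets f := fun n => hmeas _ (hUrange n)
  have hfinf : ∀ x, (f x).Infinite := by
    intro x hfin
    apply hlarge x
    have hsub : {V ∈ 𝒰 | x ∈ V} ⊆ U '' (f x) := by
      rintro V ⟨hV, hxV⟩
      obtain ⟨n, rfl⟩ := hUsurj V hV
      exact ⟨n, hxV, rfl⟩
    exact (hfin.image U).subset hsub
  have hlinr : LinQuasi (Set.range f) := by
    rintro b1 ⟨x, rfl⟩ b2 ⟨y, rfl⟩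
    have key : ∀ u v : α, {V ∈ 𝒰 | u ∈ V ∧ v ∉ V}.Finite → (f u \ f v).Finite := by
      intro u v h
      apply Set.Finite.of_finite_image ?_ hUinj.injOn
      apply h.subset
      rintro V ⟨n, ⟨hu, hv⟩, rfl⟩
      exact ⟨hUrange n, hu, hv⟩
    rcases htau x y with h | h
    · exact Or.inl (key x y h)
    · exact Or.inr (key y x h)
  have hpi : ∃ a, PseudoIntersection a (Set.range f) := by
    by_contra h
    exact hR f hfB hfinf ⟨by rintro b ⟨x, rfl⟩; exact hfinf x, hlinr, h⟩
  obtain ⟨c, hcinf, hcsub⟩ := hpi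
  refine ⟨U '' c, ?_, (c.to_countable).image U, ?_, ⟨?_, ?_⟩, ?_, ?_⟩
  · rintro V ⟨n, -, rfl⟩
    exact hUrange n
  · rintro V ⟨n, -, rfl⟩
    exact hmeas _ (hUrange n)
  · apply eq_univ_of_forall
    intro x
    have hfx : (c \ f x).Finite := hcsub (f x) ⟨x, rfl⟩
    obtain ⟨n, hn⟩ := (hcinf.diff hfx).nonempty
    have hnf : n ∈ f x := by
      by_contra h
      exact hn.2 ⟨hn.1, h⟩
    exact ⟨U n, ⟨n, hn.1, rfl⟩, hnf⟩
  · rintro ⟨n, -, hUn⟩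
    exact hnu (hUn ▸ hUrange n)
  · exact (Set.infinite_image_iff hUinj.injOn).mpr hcinf
  · intro x
    have hfx : (c \ f x).Finite := hcsub (f x) ⟨x, rfl⟩
    apply (hfx.image U).subset
    rintro V ⟨⟨n, hnc, rfl⟩, hxV⟩
    exact ⟨n, ⟨hnc, hxV⟩, rfl⟩


/-- `X` satisfies binom(B_T,B_Γ) iff no Borel image of `X` in `[ℕ]^∞` is a
tower. -/
theorem statement8 (X : Set ℝ) (hX : X.Infinite) :
    Binom (BorelTau ↥X) (BorelGamma ↥X) ↔
      ∀ f : ↥X → Set ℕ, BorelMeasSets f → (∀ x, (f x).Infinite) →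
        ¬ IsTower (Set.range f) := by
  constructor
  · intro hB f hfB hfI htw
    obtain ⟨-, hlin, hnpi⟩ := htw
    apply hnpi
    exact forward_core hB f hfB hfI
      (fun x y => hlin (f x) ⟨x, rfl⟩ (f y) ⟨y, rfl⟩)
  · intro hR
    obtain ⟨x0, hx0⟩ := hX.nonempty
    exact backward_core (⟨x0, hx0⟩ : ↥X) hR


end TauCoverPaper
end

section
/- For every infinite set of real numbers X, the following are equivalent: (1) X satisfies Ufin(B_Γ,B_T); (2) every Borel image of X in ℕ^ℕ satisfies the excluded middle property. -/
open Set

namespace TauCoverPaper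

variable {α : Type}

/-!
Read a sequence `V : ℕ → Set X` through its traces `{n | x ∈ V n}`, `x ∈ X`. Then `range V` is
a τ-cover exactly when the traces, restricted to the first occurrence of each member, are
infinite and linearly quasiordered by `⊆*`. For `V n = {x | f x n < g n}` the traces are the
sets `{n | f x n < g n}`, and their forming such a family is precisely the excluded middle
property with witness `g`.

(2) ⇒ (1): let `f x n` be the index of the first member of the `n`-th cover containing `x`, and
keep the first `g n` members. Restricting to first occurrences keeps the traces infinite: if `x`
lay in only finitely many distinct members `Sᵢ`, pick `zᵢ ∉ Sᵢ`; the traces form a centered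
family, and an index common to the traces of `x` and of all `zᵢ` gives a member containing `x`
that is none of the `Sᵢ`.

(1) ⇒ (2): apply Ufin to the γ-covers by the sublevel sets `{x | f x n < m}` of the unbounded
coordinates `n`. A finite union of such sets is again one, so the selected τ-cover prescribes
`g` on those coordinates. If infinitely many coordinates are bounded, `g` just above the bounds
works directly.
-/

theorem AlmostSubset.refl (a : Set ℕ) : AlmostSubset a a := by
  simp [AlmostSubset]

theorem AlmostSubset.trans {a b c : Set ℕ} (hab : AlmostSubset a b) (hbc : AlmostSubset b c) :
    AlmostSubset a c :=
  (hab.union hbc).subset (sdiff_triangle a b c)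

theorem AlmostSubset.inter {a b c : Set ℕ} (hab : AlmostSubset a b) (hac : AlmostSubset a c) :
    AlmostSubset a (b ∩ c) := by
  rw [AlmostSubset, sdiff_inter]
  exact hab.union hac

theorem AlmostSubset.inter_left {a b : Set ℕ} (h : AlmostSubset a b) (s : Set ℕ) :
    AlmostSubset (s ∩ a) (s ∩ b) :=
  h.subset fun _ ⟨⟨hs, ha⟩, hnb⟩ => ⟨ha, fun hb => hnb ⟨hs, hb⟩⟩

theorem LinQuasi.exists_almostSubset_sInter {Y : Set (Set ℕ)} (hY : LinQuasi Y)
    {F : Set (Set ℕ)} (hF : F.Finite) (hFY : F ⊆ Y) (hne : F.Nonempty) :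
    ∃ b ∈ F, AlmostSubset b (⋂₀ F) := by
  induction F, hF using Set.Finite.induction_on with
  | empty => exact absurd hne not_nonempty_empty
  | @insert a F _ _ ih =>
    rcases F.eq_empty_or_nonempty with rfl | hF
    · exact ⟨a, mem_insert a ∅, by simpa using AlmostSubset.refl a⟩
    obtain ⟨b, hbF, hb⟩ := ih ((subset_insert a F).trans hFY) hF
    rw [sInter_insert]
    rcases hY a (hFY (mem_insert a F)) b (hFY (mem_insert_of_mem a hbF)) with hab | hba
    · exact ⟨a, mem_insert a F, (AlmostSubset.refl a).inter (hab.trans hb)⟩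
    · exact ⟨b, mem_insert_of_mem a hbF, hba.inter hb⟩

theorem LinQuasi.centered {Y : Set (Set ℕ)} (hY : LinQuasi Y) (hinf : ∀ a ∈ Y, a.Infinite) :
    Centered Y := by
  intro F hFY hF hne
  obtain ⟨b, hbF, hb⟩ := hY.exists_almostSubset_sInter hF hFY hne
  refine ((hinf b (hFY hbF)).sdiff hb).mono ?_
  rw [sdiff_sdiff_right_self]
  exact inter_subset_right

def IsInfiniteAlmostChain {ι : Type*} (A : ι → Set ℕ) : Prop :=
  (∀ i, (A i).Infinite) ∧ LinQuasi (range A)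

theorem IsInfiniteAlmostChain.image {ι : Type*} {A : ι → Set ℕ} (hA : IsInfiniteAlmostChain A)
    {σ : ℕ → ℕ} (hσ : Function.Injective σ) : IsInfiniteAlmostChain fun i => σ '' A i := by
  refine ⟨fun i => (hA.1 i).image hσ.injOn, ?_⟩
  rintro _ ⟨i, rfl⟩ _ ⟨j, rfl⟩
  simp only [AlmostSubset, ← image_sdiff hσ]
  exact (hA.2 _ ⟨i, rfl⟩ _ ⟨j, rfl⟩).imp (·.image σ) (·.image σ)

theorem excludedMiddleProp_range_iff {ι : Type*} (f : ι → ℕ → ℕ) :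
    ExcludedMiddleProp (range f) ↔
      ∃ g : ℕ → ℕ, IsInfiniteAlmostChain fun i => {n | f i n < g n} := by
  have hdiff : ∀ (g : ℕ → ℕ) i j,
      {n | f i n < g n} \ {n | f j n < g n} = {n | f i n < g n ∧ g n ≤ f j n} := by
    intro g i j
    ext n
    simp
  simp only [ExcludedMiddleProp, IsInfiniteAlmostChain, LinQuasi, AlmostSubset,
    forall_mem_range, hdiff]

theorem excludedMiddleProp_of_infinite_bounded {ι : Type*} (f : ι → ℕ → ℕ)
    (h : {n | ∃ m, ∀ i, f i n < m}.Infinite) : ExcludedMiddleProp (range f) := by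
  classical
  refine ⟨fun n => if hn : ∃ m, ∀ i, f i n < m then Nat.find hn else 0, ?_, ?_⟩
  · rintro _ ⟨i, rfl⟩
    refine h.mono fun n hn => ?_
    simp only [mem_ofPred_eq] at hn ⊢
    rw [dif_pos hn]
    exact Nat.find_spec hn i
  · rintro _ ⟨i, rfl⟩ _ ⟨j, rfl⟩
    refine Or.inl (finite_empty.subset fun n ⟨hlt, hle⟩ => ?_)
    beta_reduce at hlt hle
    split_ifs at hlt hle with hn
    · exact absurd (Nat.find_spec hn j) (not_lt.2 hle)
    · exact absurd hlt (Nat.not_lt_zero _)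

section FirstIndices

variable {β : Type*} (V : ℕ → β)

def firstIndices : Set ℕ := {k | ∀ j < k, V j ≠ V k}

theorem injOn_firstIndices : InjOn V (firstIndices V) := by
  intro i hi j hj hij
  rcases lt_trichotomy i j with h | h | h
  · exact absurd hij (hj i h)
  · exact h
  · exact absurd hij.symm (hi j h)

theorem image_firstIndices : V '' firstIndices V = range V := by
  classical
  refine (image_subset_range _ _).antisymm ?_
  rintro _ ⟨n, rfl⟩
  have h : ∃ k, V k = V n := ⟨n, rfl⟩
  exact ⟨Nat.find h, fun j hj hVj => absurd hj
    (not_lt.2 (Nat.find_min' h (hVj.trans (Nat.find_spec h)))), Nat.find_spec h⟩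

theorem finite_firstIndices_iff (p : β → Prop) :
    {k ∈ firstIndices V | p (V k)}.Finite ↔ {b ∈ range V | p b}.Finite := by
  have himage : V '' (firstIndices V ∩ V ⁻¹' {b | p b}) = {b ∈ range V | p b} := by
    rw [image_inter_preimage, image_firstIndices]
    rfl
  rw [← himage, finite_image_iff ((injOn_firstIndices V).mono inter_subset_left)]
  rfl

end FirstIndices

theorem isTauCover_range_iff (V : ℕ → Set α) :
    IsTauCover (range V) ↔
      (∀ n, V n ≠ univ) ∧ IsInfiniteAlmostChain fun x => {k ∈ firstIndices V | x ∈ V k} := by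
  have hlarge : ∀ x, {k ∈ firstIndices V | x ∈ V k}.Infinite ↔ {U ∈ range V | x ∈ U}.Infinite :=
    fun x => not_congr (finite_firstIndices_iff V (x ∈ ·))
  have hpair : ∀ x y, AlmostSubset {k ∈ firstIndices V | x ∈ V k} {k ∈ firstIndices V | y ∈ V k}
      ↔ {U ∈ range V | x ∈ U ∧ y ∉ U}.Finite := by
    intro x y
    rw [← finite_firstIndices_iff V (fun U => x ∈ U ∧ y ∉ U), AlmostSubset]
    congr! 1
    ext k
    simp only [mem_sdiff, mem_ofPred_eq]
    tauto
  simp only [IsTauCover, IsLargeCover, IsCover, IsInfiniteAlmostChain, LinQuasi,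
    forall_exists_index, forall_apply_eq_imp_iff, hlarge, hpair, mem_range,
    not_exists]
  constructor
  · rintro ⟨⟨⟨-, hne⟩, hinf⟩, hτ⟩
    exact ⟨hne, hinf, hτ⟩
  · rintro ⟨hne, hinf, hτ⟩
    refine ⟨⟨⟨eq_univ_of_forall fun x => ?_, hne⟩, hinf⟩, hτ⟩
    obtain ⟨U, ⟨hU, hxU⟩⟩ := (hinf x).nonempty
    exact ⟨U, hU, hxU⟩

theorem isInfiniteAlmostChain_firstIndices {V : ℕ → Set α} (hV : ∀ n, V n ≠ univ)
    (hA : IsInfiniteAlmostChain fun x => {n | x ∈ V n}) :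
    IsInfiniteAlmostChain fun x => {k ∈ firstIndices V | x ∈ V k} := by
  refine ⟨fun x hI => ?_, ?_⟩
  · choose z hz using fun n => (ne_univ_iff_exists_notMem (V n)).1 (hV n)
    set A : α → Set ℕ := fun x => {n | x ∈ V n}
    have hcen : Centered (range A) := hA.2.centered (forall_mem_range.2 hA.1)
    obtain ⟨n, hn⟩ := (hcen (insert (A x) ((A ∘ z) '' {k ∈ firstIndices V | x ∈ V k}))
      (insert_subset (mem_range_self x)
        ((image_subset_range _ _).trans (range_comp_subset_range z A)))
      ((hI.image _).insert _) (insert_nonempty _ _)).nonempty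
    rw [mem_sInter] at hn
    obtain ⟨k, hk, hVk⟩ : V n ∈ V '' firstIndices V :=
      (image_firstIndices V).symm ▸ mem_range_self n
    have hxk : x ∈ V k := hVk ▸ hn (A x) (mem_insert _ _)
    exact hz k (hVk ▸ hn (A (z k)) (mem_insert_of_mem _ ⟨k, ⟨hk, hxk⟩, rfl⟩))
  · rintro _ ⟨x, rfl⟩ _ ⟨y, rfl⟩
    exact (hA.2 _ ⟨x, rfl⟩ _ ⟨y, rfl⟩).imp (·.inter_left _) (·.inter_left _)

theorem ufin_borelTau_of_forall_excludedMiddleProp [MeasurableSpace α]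
    {𝔘 : Set (Set (Set α))}
    (h𝔘 : ∀ 𝒰 ∈ 𝔘, 𝒰.Countable ∧ (∀ U ∈ 𝒰, MeasurableSet U) ∧ ⋃₀ 𝒰 = univ)
    (hemp : ∀ f : α → ℕ → ℕ, Measurable f → ExcludedMiddleProp (range f)) :
    Ufin 𝔘 (BorelTau α) := by
  classical
  intro 𝒰 h𝒰 hnofin
  have hne : ∀ n, (𝒰 n).Nonempty := fun n => nonempty_iff_ne_empty.2 fun h𝒰n =>
    hnofin n ⟨∅, empty_subset _, finite_empty, by rw [← (h𝔘 _ (h𝒰 n)).2.2, h𝒰n]⟩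
  choose U hU using fun n => (h𝔘 _ (h𝒰 n)).1.exists_eq_range (hne n)
  have hUmeas : ∀ n k, MeasurableSet (U n k) :=
    fun n k => (h𝔘 _ (h𝒰 n)).2.1 _ (hU n ▸ mem_range_self k)
  have hcov : ∀ x n, ∃ k, x ∈ U n k := fun x n => by
    have hx : x ∈ ⋃₀ 𝒰 n := (h𝔘 _ (h𝒰 n)).2.2 ▸ mem_univ x
    simpa [hU n] using hx
  set ψ : α → ℕ → ℕ := fun x n => Nat.find (hcov x n)
  have hψ : Measurable ψ :=
    measurable_pi_iff.2 fun n => measurable_find (fun x => hcov x n) (hUmeas n)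
  obtain ⟨g, hg⟩ := (excludedMiddleProp_range_iff ψ).1 (hemp ψ hψ)
  set V : ℕ → Set α := fun n => ⋃₀ (U n '' Iio (g n))
  have htrace : (fun x => {n | x ∈ V n}) = fun x => {n | ψ x n < g n} := by
    ext x n
    simp [V, ψ, Nat.find_lt_iff]
  have hVne : ∀ n, V n ≠ univ := fun n hVn =>
    hnofin n ⟨_, hU n ▸ image_subset_range _ _, (finite_Iio _).image _, hVn⟩
  refine ⟨fun n => U n '' Iio (g n),
    fun n => ⟨(finite_Iio _).image _, hU n ▸ image_subset_range _ _⟩, countable_range V,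
    forall_mem_range.2 fun n => ((finite_Iio _).image _).measurableSet_sUnion ?_,
    (isTauCover_range_iff V).2 ⟨hVne, isInfiniteAlmostChain_firstIndices hVne (htrace ▸ hg)⟩⟩
  rintro _ ⟨k, -, rfl⟩
  exact hUmeas n k

section SublevelCover

variable (φ : α → ℕ)

def sublevelCover : Set (Set α) := range fun m => {x | φ x < m}

theorem exists_sUnion_eq_of_subset_sublevelCover {F : Set (Set α)} (hF : F.Finite)
    (hFφ : F ⊆ sublevelCover φ) : ∃ t, ⋃₀ F = {x | φ x < t} := by
  induction F, hF using Set.Finite.induction_on with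
  | empty => exact ⟨0, by simp⟩
  | @insert S F _ _ ih =>
    obtain ⟨s, rfl⟩ := hFφ (mem_insert _ F)
    obtain ⟨t, ht⟩ := ih ((subset_insert _ F).trans hFφ)
    refine ⟨max s t, ?_⟩
    ext x
    simp [ht]

variable {φ}

theorem not_exists_finite_subcover_sublevelCover (hφ : ∀ m, ∃ x, m ≤ φ x) :
    ¬ ∃ F : Set (Set α), F ⊆ sublevelCover φ ∧ F.Finite ∧ ⋃₀ F = univ := by
  rintro ⟨F, hFφ, hF, hcov⟩
  obtain ⟨t, ht⟩ := exists_sUnion_eq_of_subset_sublevelCover φ hF hFφ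
  obtain ⟨x, hx⟩ := hφ t
  have hxF : x ∈ ⋃₀ F := hcov ▸ mem_univ x
  rw [ht] at hxF
  exact absurd hxF (not_lt.2 hx)

theorem sublevelCover_mem_borelGamma [MeasurableSpace α] (hmeas : Measurable φ)
    (hφ : ∀ m, ∃ x, m ≤ φ x) : sublevelCover φ ∈ BorelGamma α := by
  have hnofin := not_exists_finite_subcover_sublevelCover hφ
  have hcov : ⋃₀ sublevelCover φ = univ :=
    eq_univ_of_forall fun x => ⟨_, ⟨φ x + 1, rfl⟩, Nat.lt_succ_self (φ x)⟩
  refine ⟨countable_range _, forall_mem_range.2 fun m => hmeas (measurableSet_Iio (a := m)),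
    ⟨hcov, fun huniv => hnofin ⟨{univ}, singleton_subset_iff.2 huniv, finite_singleton _,
      sUnion_singleton _⟩⟩, fun hfin => hnofin ⟨_, subset_rfl, hfin, hcov⟩, fun x => ?_⟩
  refine ((finite_Iic (φ x)).image fun m => {y | φ y < m}).subset ?_
  rintro _ ⟨⟨m, rfl⟩, hx⟩
  exact ⟨m, mem_Iic.2 (not_lt.1 hx), rfl⟩

end SublevelCover

theorem excludedMiddleProp_of_ufin [MeasurableSpace α]
    (hufin : Ufin (BorelGamma α) (BorelTau α)) (f : α → ℕ → ℕ) (hf : Measurable f) :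
    ExcludedMiddleProp (range f) := by
  classical
  by_cases hbdd : {n | ∃ m, ∀ x, f x n < m}.Infinite
  · exact excludedMiddleProp_of_infinite_bounded f hbdd
  have hJ : {n | ∀ m, ∃ x, m ≤ f x n}.Infinite := by
    refine (not_infinite.1 hbdd).infinite_compl.mono fun n hn => ?_
    simpa using hn
  set σ : ℕ → ℕ := fun k => hJ.natEmbedding _ k
  have hσ : Function.Injective σ := Subtype.val_injective.comp (hJ.natEmbedding _).injective
  have hσJ : ∀ k m, ∃ x, m ≤ f x (σ k) := fun k => (hJ.natEmbedding _ k).2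
  obtain ⟨F, hF, hτ⟩ := hufin (fun k => sublevelCover fun x => f x (σ k))
    (fun k => sublevelCover_mem_borelGamma ((measurable_pi_apply _).comp hf) (hσJ k))
    (fun k => not_exists_finite_subcover_sublevelCover (hσJ k))
  choose t ht using fun k => exists_sUnion_eq_of_subset_sublevelCover _ (hF k).1 (hF k).2
  set V : ℕ → Set α := fun k => ⋃₀ F k
  obtain ⟨-, hchain⟩ := (isTauCover_range_iff V).1 hτ.2.2
  set g : ℕ → ℕ := Function.extend σ (fun k => if k ∈ firstIndices V then t k else 0) 0
  have htrace : ∀ x, {n | f x n < g n} = σ '' {k ∈ firstIndices V | x ∈ V k} := by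
    intro x
    ext n
    by_cases hn : ∃ k, σ k = n
    · obtain ⟨k, rfl⟩ := hn
      simp only [mem_ofPred_eq, g, hσ.extend_apply, hσ.mem_set_image, V, ht]
      split_ifs with hk <;> simp [hk]
    · simp only [mem_ofPred_eq, g, Function.extend_apply' _ _ _ hn]
      simpa using fun k _ _ h => hn ⟨k, h⟩
  exact (excludedMiddleProp_range_iff f).2 ⟨g, by simpa only [htrace] using hchain.image hσ⟩

theorem statement11_general (X : Set ℝ) :
    Ufin (BorelGamma ↥X) (BorelTau ↥X) ↔
      ∀ f : ↥X → (ℕ → ℕ), Measurable f → ExcludedMiddleProp (Set.range f) :=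
  ⟨excludedMiddleProp_of_ufin,
    ufin_borelTau_of_forall_excludedMiddleProp fun _ h𝒰 => ⟨h𝒰.1, h𝒰.2.1, h𝒰.2.2.1.1⟩⟩

/-- `X` satisfies Ufin(B_Γ,B_T) iff every Borel image of `X` in `ℕ^ℕ`
satisfies the excluded middle property. -/
theorem statement11 (X : Set ℝ) (hX : X.Infinite) :
    Ufin (BorelGamma ↥X) (BorelTau ↥X) ↔
      ∀ f : ↥X → (ℕ → ℕ), Measurable f → ExcludedMiddleProp (Set.range f) :=
  statement11_general X

end TauCoverPaper
end
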